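/- arXiv:1606.06223 — 3 statements merged into one kernel-verified Lean document; each statement's English description precedes it below -/
import Mathlib

section
/- For constants λ_j, Z_j, c > 0 and R > 0, the integral 2πλ_j ∫₀^{R/c} exp(−Z_j r²) · ((R² − c² r²)/R²) · r dr equals πλ_j/Z_j − (λ_j π c²/(R² Z_j²)) · (1 − exp(−Z_j R²/c²)). -/
/-!
With `b = (c/R)²` the integrand is `exp (-(Z r²)) (1 - b r²) r`, which has the elementary
antiderivative `-exp (-(Z r²)) (1 - b r² - b/Z) / (2Z)`; at the upper limit `r = R/c` the
factor `1 - b r²` vanishes, leaving only the `b/Z` term.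
-/

open MeasureTheory Real Set intervalIntegral

theorem hasDerivAt_exp_neg_mul_sq_mul_one_sub_antideriv {Z : ℝ} (hZ : Z ≠ 0) (b r : ℝ) :
    HasDerivAt (fun r => -(exp (-(Z * r ^ 2)) * (1 - b * r ^ 2 - b / Z) / (2 * Z)))
      (exp (-(Z * r ^ 2)) * (1 - b * r ^ 2) * r) r := by
  have hexp : HasDerivAt (fun r => exp (-(Z * r ^ 2))) (exp (-(Z * r ^ 2)) * -(Z * (2 * r))) r :=
    (((hasDerivAt_pow 2 r).const_mul Z).neg.congr_deriv (by ring)).exp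
  have hpoly : HasDerivAt (fun r => 1 - b * r ^ 2 - b / Z) (-(b * (2 * r))) r := by
    simpa using (((hasDerivAt_pow 2 r).const_mul b).const_sub 1).sub_const (b / Z)
  refine ((hexp.mul hpoly).div_const (2 * Z)).neg.congr_deriv ?_
  field_simp
  ring

theorem integral_exp_neg_mul_sq_mul_one_sub {Z : ℝ} (hZ : Z ≠ 0) (b a : ℝ) :
    ∫ r in (0 : ℝ)..a, exp (-(Z * r ^ 2)) * (1 - b * r ^ 2) * r
      = (1 - b / Z - exp (-(Z * a ^ 2)) * (1 - b * a ^ 2 - b / Z)) / (2 * Z) := by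
  rw [integral_eq_sub_of_hasDerivAt
    (fun r _ => hasDerivAt_exp_neg_mul_sq_mul_one_sub_antideriv hZ b r)
    (by apply Continuous.intervalIntegrable; fun_prop)]
  simp only [ne_eq, OfNat.ofNat_ne_zero, not_false_eq_true, zero_pow, mul_zero, neg_zero, exp_zero]
  ring

theorem association_prob_tier_j_matern_general
    (lamj Zj c R : ℝ) (hZj : 0 < Zj) (hc : 0 < c) (hR : 0 < R) :
    2 * π * lamj *
        ∫ r in (0 : ℝ)..(R / c), exp (-(Zj * r ^ 2)) * ((R ^ 2 - c ^ 2 * r ^ 2) / R ^ 2) * r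
      = π * lamj / Zj -
        (lamj * π * c ^ 2 / (R ^ 2 * Zj ^ 2)) * (1 - exp (-(Zj * R ^ 2 / c ^ 2))) := by
  have hdisc : ∀ r : ℝ, (R ^ 2 - c ^ 2 * r ^ 2) / R ^ 2 = 1 - (c / R) ^ 2 * r ^ 2 := fun r => by
    field_simp
  have hexponent : Zj * (R / c) ^ 2 = Zj * R ^ 2 / c ^ 2 := by ring
  have hboundary : (c / R) ^ 2 * (R / c) ^ 2 = 1 := by field_simp
  simp_rw [hdisc]
  rw [integral_exp_neg_mul_sq_mul_one_sub hZj.ne', hboundary, hexponent]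
  field_simp
  ring

/-- For constants `λ_j, Z_j, c > 0` and `R > 0`,
`2πλ_j ∫₀^{R/c} exp(−Z_j r²)·((R² − c²r²)/R²)·r dr
  = πλ_j/Z_j − (λ_j π c²/(R² Z_j²))·(1 − exp(−Z_j R²/c²))`
(the Matérn tier-`j` association probability). -/
theorem association_prob_tier_j_matern
    (lamj Zj c R : ℝ) (hlamj : 0 < lamj) (hZj : 0 < Zj) (hc : 0 < c) (hR : 0 < R) :
    2 * π * lamj *
        ∫ r in (0 : ℝ)..(R / c), exp (-(Zj * r ^ 2)) * ((R ^ 2 - c ^ 2 * r ^ 2) / R ^ 2) * r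
      = π * lamj / Zj -
        (lamj * π * c ^ 2 / (R ^ 2 * Zj ^ 2)) * (1 - exp (-(Zj * R ^ 2 / c ^ 2))) :=
  association_prob_tier_j_matern_general lamj Zj c R hZj hc hR
end

section
/- For α > 2 and s, P, w > 0, with τ = sPw^{−α}, 2 ∫_{w}^{∞} (sPr^{−α}/(1 + sPr^{−α})) r dr = w² · (2τ/(α−2)) · ₂F₁(1, 1 − 2/α; 2 − 2/α; −τ). -/
open MeasureTheory Real Set

/-- Gaussian hypergeometric function `₂F₁(a,b;c;t)` via its Euler integral
representation `₂F₁(a,b;c;t) = (Γ(c)/(Γ(b)Γ(c−b))) ∫₀¹ z^{b−1}(1−z)^{c−b−1}(1−tz)^{−a} dz`. -/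
noncomputable def hyp2F1 (a b c t : ℝ) : ℝ :=
  (Real.Gamma c / (Real.Gamma b * Real.Gamma (c - b))) *
    ∫ z in (0 : ℝ)..1, z ^ (b - 1) * (1 - z) ^ (c - b - 1) * (1 - t * z) ^ (-a)

/-- For `α > 2` and `s, P, w > 0`, with `τ = sPw^{−α}`,
`2 ∫_w^∞ (sPr^{−α}/(1 + sPr^{−α})) r dr = w² · (2τ/(α−2)) · ₂F₁(1, 1−2/α; 2−2/α; −τ)`. -/
theorem interference_integral_hypergeometric
    (α s P w : ℝ) (hα : 2 < α) (hs : 0 < s) (hP : 0 < P) (hw : 0 < w) :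
    2 * ∫ r in Set.Ioi w, (s * P * r ^ (-α) / (1 + s * P * r ^ (-α))) * r
      = w ^ 2 * ((2 * (s * P * w ^ (-α)) / (α - 2)) *
          hyp2F1 1 (1 - 2 / α) (2 - 2 / α) (-(s * P * w ^ (-α)))) := by
  have hα0 : (0:ℝ) < α := by linarith
  have hαne : α ≠ 0 := ne_of_gt hα0
  set τ := s * P * w ^ (-α) with hτdef
  have hτ : 0 < τ := by
    have := Real.rpow_pos_of_pos hw (-α); positivity
  set g : ℝ → ℝ := fun z => z ^ (-2/α) * (1 + τ * z)⁻¹ with hg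
  -- the common interval integral
  set I := ∫ z in (0:ℝ)..1, g z with hI
  -- Step 1 : the hypergeometric side
  have hb : (0:ℝ) < 1 - 2/α := by
    have : 2/α < 1 := (div_lt_one hα0).mpr hα
    linarith
  have hΓne : Real.Gamma (1 - 2/α) ≠ 0 := ne_of_gt (Real.Gamma_pos_of_pos hb)
  have hRHS : hyp2F1 1 (1 - 2 / α) (2 - 2 / α) (-τ) = (1 - 2/α) * I := by
    unfold hyp2F1
    have hco : Real.Gamma (2 - 2/α) /
        (Real.Gamma (1 - 2/α) * Real.Gamma (2 - 2/α - (1 - 2/α))) = 1 - 2/α := by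
      have h1 : (2 : ℝ) - 2/α - (1 - 2/α) = 1 := by ring
      have h2 : (2 : ℝ) - 2/α = (1 - 2/α) + 1 := by ring
      rw [h1, h2, Real.Gamma_add_one (ne_of_gt hb), Real.Gamma_one, mul_one,
        mul_div_assoc, div_self hΓne, mul_one]
    rw [hco]
    congr 1
    apply intervalIntegral.integral_congr
    intro z _
    have h1 : (1 - 2/α) - 1 = -2/α := by ring
    have h2 : (2 - 2/α) - (1 - 2/α) - 1 = (0:ℝ) := by ring
    have h3 : (1 - (-τ) * z) = 1 + τ * z := by ring
    simp only [h1, h2, h3, Real.rpow_zero, mul_one, Real.rpow_neg_one, hg]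
  -- Step 2 : change of variables on the Ioi integral
  set f : ℝ → ℝ := fun z => w * z ^ (-1/α) with hf
  set f' : ℝ → ℝ := fun z => w * (-1/α * z ^ (-1/α - 1)) with hf'
  have hderiv : ∀ z ∈ Ioo (0:ℝ) 1, HasDerivWithinAt f (f' z) (Ioo 0 1) z := by
    intro z hz
    exact ((Real.hasDerivAt_rpow_const (p := -1/α)
      (Or.inl (ne_of_gt hz.1))).const_mul w).hasDerivWithinAt
  have hpow1 : ∀ z : ℝ, 0 < z → (z ^ (-1/α)) ^ (-α) = z := by
    intro z hz
    rw [← Real.rpow_mul hz.le]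
    have : -1/α * (-α) = 1 := by field_simp
    rw [this, Real.rpow_one]
  have hinj : InjOn f (Ioo 0 1) := by
    intro z1 h1 z2 h2 he
    have e1 : z1 ^ (-1/α) = z2 ^ (-1/α) := by
      have := he
      simp only [hf] at this
      exact mul_left_cancel₀ (ne_of_gt hw) this
    have e2 : (z1 ^ (-1/α)) ^ (-α) = (z2 ^ (-1/α)) ^ (-α) := by rw [e1]
    rwa [hpow1 z1 h1.1, hpow1 z2 h2.1] at e2
  have himg : f '' Ioo 0 1 = Ioi w := by
    ext y
    simp only [mem_image, mem_Ioi, mem_Ioo]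
    constructor
    · rintro ⟨z, ⟨hz0, hz1⟩, rfl⟩
      have hexp : -1/α < 0 := div_neg_of_neg_of_pos (by norm_num) hα0
      have : 1 < z ^ (-1/α) :=
        (Real.one_lt_rpow_iff_of_pos hz0).mpr (Or.inr ⟨hz1, hexp⟩)
      calc w = w * 1 := (mul_one w).symm
        _ < w * z ^ (-1/α) := by exact (mul_lt_mul_iff_right₀ hw).mpr this
    · intro hy
      have hy0 : 0 < y := lt_trans hw hy
      have hwy : 0 < w / y := by positivity
      refine ⟨(w/y) ^ α, ⟨Real.rpow_pos_of_pos hwy α,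
        Real.rpow_lt_one hwy.le ((div_lt_one hy0).mpr hy) hα0⟩, ?_⟩
      show w * ((w/y) ^ α) ^ (-1/α) = y
      rw [← Real.rpow_mul hwy.le]
      have : α * (-1/α) = -1 := by field_simp
      rw [this, Real.rpow_neg_one]
      field_simp
  have hcv : (∫ r in Set.Ioi w, (s * P * r ^ (-α) / (1 + s * P * r ^ (-α))) * r)
      = ∫ z in Ioo (0:ℝ) 1, |f' z| •
          ((s * P * (f z) ^ (-α) / (1 + s * P * (f z) ^ (-α))) * (f z)) := by
    rw [← himg]
    exact integral_image_eq_integral_abs_deriv_smul measurableSet_Ioo hderiv hinj _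
  -- Step 3 : simplify the transformed integrand on (0,1)
  have hptw : ∀ z ∈ Ioo (0:ℝ) 1,
      |f' z| • ((s * P * (f z) ^ (-α) / (1 + s * P * (f z) ^ (-α))) * (f z))
        = (w ^ 2 * τ / α) * g z := by
    intro z hz
    have hz0 : 0 < z := hz.1
    have hfz : s * P * (f z) ^ (-α) = τ * z := by
      simp only [hf]
      rw [Real.mul_rpow hw.le (Real.rpow_nonneg hz0.le _), hpow1 z hz0, hτdef]
      ring
    have habs : |f' z| = w / α * z ^ (-1/α - 1) := by
      have hpos : 0 < w / α * z ^ (-1/α - 1) := by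
        have := Real.rpow_pos_of_pos hz0 (-1/α - 1); positivity
      have : f' z = -(w / α * z ^ (-1/α - 1)) := by simp only [hf']; ring
      rw [this, abs_neg, abs_of_pos hpos]
    rw [smul_eq_mul, hfz, habs]
    have key : z ^ (-1/α - 1) * (z * z ^ (-1/α)) = z ^ (-2/α) := by
      have h' : z ^ (-1/α - 1) * (z * z ^ (-1/α))
          = z ^ ((-1/α - 1) + (1 + (-1/α))) := by
        rw [Real.rpow_add hz0, Real.rpow_add hz0, Real.rpow_one]
      rw [h']
      congr 1
      ring
    simp only [hf, hg, div_eq_mul_inv]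
    calc w * α⁻¹ * z ^ (-1/α - 1) * (τ * z * (1 + τ * z)⁻¹ * (w * z ^ (-1/α)))
        = w ^ 2 * τ * α⁻¹ * (z ^ (-1/α - 1) * (z * z ^ (-1/α))) * (1 + τ * z)⁻¹ := by
          ring
      _ = w ^ 2 * τ * α⁻¹ * (z ^ (-2/α) * (1 + τ * z)⁻¹) := by rw [key]; ring
  -- Step 4 : put everything together
  have hIoo : (∫ z in Ioo (0:ℝ) 1, |f' z| •
      ((s * P * (f z) ^ (-α) / (1 + s * P * (f z) ^ (-α))) * (f z)))
      = (w ^ 2 * τ / α) * I := by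
    rw [MeasureTheory.setIntegral_congr_fun measurableSet_Ioo hptw,
      MeasureTheory.integral_const_mul]
    congr 1
    rw [hI, intervalIntegral.integral_of_le (by norm_num : (0:ℝ) ≤ 1),
      MeasureTheory.integral_Ioc_eq_integral_Ioo]
  rw [hcv, hIoo, hRHS]
  have hα2 : α - 2 ≠ 0 := by intro h; linarith [hα]
  field_simp
end

section
/- Let P_c(ζ) denote the total coverage probability in the K-tier model when the user's distance to its cluster center is ζY₀ for a fixed positive random variable Y₀ with continuous distribution. Then lim_{ζ→∞} P_c(ζ) = ∑_{j=1}^K λ_j / (∑_{k=1}^K c_{jk}² (λ_k(G(α,τ)+1) + λ_k′ H(α,τ))), i.e., the coverage probability converges to that of a user distributed independently of the BS locations. -/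
open MeasureTheory Real Set Filter Finset

/-- The interference constant `G(α,τ)`. -/
noncomputable def Gconst (α τ : ℝ) : ℝ :=
  (2 * τ / (α - 2)) * hyp2F1 1 (1 - 2 / α) (2 - 2 / α) (-τ)

/-- The interference constant `H(α,τ)`. -/
noncomputable def Hconst (α τ : ℝ) : ℝ :=
  τ ^ (2 / α) * (2 * Real.pi / α) * (1 / Real.sin (2 * Real.pi / α))

open Topology

/-! After the substitution `w = ζu` every term of `P_c(ζ)` is an integral of the density `f`
against a bounded profile evaluated at `ζu`, so dominated convergence (dominated by `f`) lets
`ζ → ∞` pass inside. The Gaussian profile of the cluster-center term tends to `0`, while the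
Laplace-transform factor `1 / (1 + τ (y/a)^{-α})` of the cluster-center interferer tends to `1`;
a second dominated convergence then sends the `j`-th tier term to
`2πλ_j ∫₀^∞ e^{-πS_j w²} w dw = λ_j / S_j`. -/

theorem hyp2F1_nonneg {a b c t : ℝ} (hb : 0 < b) (hcb : 0 < c - b) (ht : t ≤ 0) :
    0 ≤ hyp2F1 a b c t := by
  refine mul_nonneg (div_nonneg (Gamma_pos_of_pos (by linarith)).le
    (mul_pos (Gamma_pos_of_pos hb) (Gamma_pos_of_pos hcb)).le) ?_
  refine intervalIntegral.integral_nonneg zero_le_one fun z hz => ?_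
  have h1 : 0 ≤ 1 - z := by linarith [hz.2]
  have h2 : 0 ≤ 1 - t * z := by nlinarith [hz.1]
  exact mul_nonneg (mul_nonneg (rpow_nonneg hz.1 _) (rpow_nonneg h1 _)) (rpow_nonneg h2 _)

theorem Gconst_nonneg {α τ : ℝ} (hα : 2 < α) (hτ : 0 < τ) : 0 ≤ Gconst α τ := by
  have h2α : 2 / α < 1 := (div_lt_one (by linarith)).mpr hα
  exact mul_nonneg (div_nonneg (by positivity) (by linarith))
    (hyp2F1_nonneg (by linarith) (by linarith) (by linarith))

theorem Hconst_nonneg {α τ : ℝ} (hα : 2 < α) (hτ : 0 < τ) : 0 ≤ Hconst α τ := by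
  have hsin : 0 < sin (2 * π / α) := sin_pos_of_pos_of_lt_pi (by positivity)
    ((div_lt_iff₀ (by linarith)).mpr (by nlinarith [pi_pos]))
  unfold Hconst
  positivity

theorem sum_sq_mul_interference_pos {ι : Type*} [Fintype ι] [Nonempty ι] {c lam lam' : ι → ℝ}
    {G H : ℝ} (hc : ∀ k, 0 < c k) (hlam : ∀ k, 0 < lam k) (hlam' : ∀ k, 0 ≤ lam' k)
    (hG : 0 ≤ G) (hH : 0 ≤ H) : 0 < ∑ k, c k ^ 2 * (lam k * (G + 1) + lam' k * H) :=
  Finset.sum_pos (fun k _ => mul_pos (pow_pos (hc k) 2) (add_pos_of_pos_of_nonneg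
    (mul_pos (hlam k) (by linarith)) (mul_nonneg (hlam' k) hH))) univ_nonempty

theorem integral_Ioi_exp_neg_mul_sq_mul_self {b : ℝ} (hb : 0 < b) :
    ∫ w in Ioi (0 : ℝ), exp (-(b * w ^ 2)) * w = (2 * b)⁻¹ := by
  have h := integral_mul_cexp_neg_mul_sq (b := (b : ℂ)) (by simpa using hb)
  have h' : ∫ w in Ioi (0 : ℝ), ((exp (-(b * w ^ 2)) * w : ℝ) : ℂ) = ((2 * b)⁻¹ : ℝ) := by
    push_cast
    rw [← h]
    exact setIntegral_congr_fun measurableSet_Ioi fun w _ => by ring_nf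
  rwa [integral_complex_ofReal, Complex.ofReal_inj] at h'

theorem integrableOn_Ioi_exp_neg_mul_sq_mul_self {b : ℝ} (hb : 0 < b) :
    IntegrableOn (fun w : ℝ => exp (-(b * w ^ 2)) * w) (Ioi 0) :=
  ((integrable_mul_exp_neg_mul_sq hb).integrableOn).congr_fun
    (fun w _ => by simp only [neg_mul, mul_comm]) measurableSet_Ioi

theorem tendsto_exp_neg_mul_sq_atTop {b : ℝ} (hb : 0 < b) :
    Tendsto (fun w : ℝ => exp (-(b * w ^ 2))) atTop (𝓝 0) :=
  tendsto_exp_neg_atTop_nhds_zero.comp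
    ((tendsto_pow_atTop two_ne_zero).const_mul_atTop hb)

theorem abs_exp_neg_mul_sq_le_one {b : ℝ} (hb : 0 ≤ b) (w : ℝ) : |exp (-(b * w ^ 2))| ≤ 1 := by
  rw [abs_of_pos (exp_pos _), exp_le_one_iff, neg_nonpos]
  positivity

section RescaledDensity

variable {f h : ℝ → ℝ}

theorem setIntegral_Ioi_mul_rescale {ζ : ℝ} (hζ : 0 < ζ) :
    ∫ w in Ioi 0, h w * (f (w / ζ) / ζ) = ∫ u in Ioi 0, h (ζ * u) * f u := by
  have hsub := integral_comp_mul_left_Ioi (fun w => h w * (f (w / ζ) / ζ)) 0 hζ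
  rw [mul_zero] at hsub
  have hscale : ∫ u in Ioi 0, h (ζ * u) * f u =
      ζ * ∫ u in Ioi 0, h (ζ * u) * (f (ζ * u / ζ) / ζ) := by
    rw [← integral_const_mul]
    refine setIntegral_congr_fun measurableSet_Ioi fun u _ => ?_
    field_simp
  rw [hscale, hsub, smul_eq_mul, mul_inv_cancel_left₀ hζ.ne']

theorem tendsto_setIntegral_Ioi_mul_rescale {C L : ℝ}
    (hf : IntegrableOn f (Ioi 0)) (hh : Measurable h) (hC : ∀ t, |h t| ≤ C)
    (hL : Tendsto h atTop (𝓝 L)) :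
    Tendsto (fun ζ => ∫ w in Ioi 0, h w * (f (w / ζ) / ζ)) atTop
      (𝓝 (L * ∫ u in Ioi 0, f u)) := by
  rw [← integral_const_mul]
  have hlim : Tendsto (fun ζ => ∫ u in Ioi 0, h (ζ * u) * f u) atTop
      (𝓝 (∫ u in Ioi 0, L * f u)) := by
    refine tendsto_integral_filter_of_dominated_convergence (fun u => C * ‖f u‖)
      (Eventually.of_forall fun ζ => ?_) (Eventually.of_forall fun ζ => ?_)
      (hf.norm.const_mul C) ?_
    · exact (hh.comp (measurable_const_mul ζ)).aestronglyMeasurable.mul hf.aestronglyMeasurable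
    · exact Eventually.of_forall fun u => by
        rw [norm_mul, Real.norm_eq_abs (h _)]
        exact mul_le_mul_of_nonneg_right (hC _) (norm_nonneg _)
    · filter_upwards [ae_restrict_mem measurableSet_Ioi] with u hu
      exact (hL.comp (tendsto_id.atTop_mul_const hu)).mul_const (f u)
  exact hlim.congr' (eventually_gt_atTop 0 |>.mono fun ζ hζ =>
    (setIntegral_Ioi_mul_rescale hζ).symm)

theorem abs_setIntegral_Ioi_mul_rescale_le (hf : IntegrableOn f (Ioi 0)) (hf0 : ∀ u, 0 ≤ f u)
    (hh : ∀ t, |h t| ≤ 1) {ζ : ℝ} (hζ : 0 < ζ) :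
    |∫ w in Ioi 0, h w * (f (w / ζ) / ζ)| ≤ ∫ u in Ioi 0, f u := by
  rw [setIntegral_Ioi_mul_rescale hζ, ← Real.norm_eq_abs]
  refine norm_integral_le_of_norm_le hf (Eventually.of_forall fun u => ?_)
  rw [norm_mul, Real.norm_eq_abs (h _), Real.norm_of_nonneg (hf0 u)]
  exact mul_le_of_le_one_left (hf0 u) (hh _)

end RescaledDensity

/-- The factor `1 / (1 + τ (y/a)^{-α})` by which the cluster-center interferer at distance `y`
reduces coverage from a serving BS at distance `a`, extended by `0` to `y ≤ a`. -/
noncomputable def centerWeight (α τ a : ℝ) : ℝ → ℝ :=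
  (Ioi a).indicator fun y => (1 + τ * (y / a) ^ (-α))⁻¹

section CenterWeight

variable {α τ a : ℝ}

theorem abs_centerWeight_le_one (hτ : 0 ≤ τ) (ha : 0 ≤ a) (y : ℝ) :
    |centerWeight α τ a y| ≤ 1 := by
  rw [centerWeight, indicator_apply]
  split_ifs with hy
  · have hd : 1 ≤ 1 + τ * (y / a) ^ (-α) :=
      le_add_of_nonneg_right (mul_nonneg hτ (rpow_nonneg (div_nonneg (ha.trans hy.le) ha) _))
    rw [abs_of_pos (inv_pos.mpr (one_pos.trans_le hd))]
    exact inv_le_one_of_one_le₀ hd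
  · simp

theorem tendsto_centerWeight_atTop (hα : 0 < α) (ha : 0 < a) :
    Tendsto (centerWeight α τ a) atTop (𝓝 1) := by
  have hpow : Tendsto (fun y => (y / a) ^ (-α)) atTop (𝓝 0) :=
    (tendsto_rpow_neg_atTop hα).comp (tendsto_id.atTop_div_const ha)
  have hlim : Tendsto (fun y => (1 + τ * (y / a) ^ (-α))⁻¹) atTop (𝓝 1) := by
    simpa using ((hpow.const_mul τ).const_add 1).inv₀ (by simp)
  exact hlim.congr' ((eventually_gt_atTop a).mono fun y hy => (indicator_of_mem hy _).symm)

theorem measurable_centerWeight_uncurry : Measurable (Function.uncurry (centerWeight α τ)) := by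
  have heq : Function.uncurry (centerWeight α τ) =
      fun p : ℝ × ℝ => if p.1 < p.2 then (1 + τ * (p.2 / p.1) ^ (-α))⁻¹ else 0 := by
    ext ⟨a, y⟩
    simp [centerWeight, indicator_apply]
  rw [heq]
  exact Measurable.ite (measurableSet_lt measurable_fst measurable_snd) (by fun_prop)
    measurable_const

theorem setIntegral_Ioi_div_eq_centerWeight (ha : 0 ≤ a) (g : ℝ → ℝ) :
    ∫ y in Ioi a, g y / (1 + τ * (y / a) ^ (-α)) =
      ∫ y in Ioi 0, centerWeight α τ a y * g y := by
  simp_rw [centerWeight, ← indicator_mul_left]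
  rw [setIntegral_indicator measurableSet_Ioi, Ioi_inter_Ioi, max_eq_right ha]
  exact setIntegral_congr_fun measurableSet_Ioi fun y _ => by simp [div_eq_inv_mul]

end CenterWeight

theorem tendsto_integral_Ioi_exp_neg_mul_sq_mul_centerWeight {f : ℝ → ℝ} {α τ a b : ℝ}
    (hα : 0 < α) (hτ : 0 ≤ τ) (ha : 0 < a) (hb : 0 < b) (hf : Measurable f)
    (hf0 : ∀ u, 0 ≤ f u) (hf1 : ∫ u in Ioi 0, f u = 1) :
    Tendsto (fun ζ => ∫ w in Ioi 0, exp (-(b * w ^ 2)) *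
        (∫ y in Ioi (a * w), (f (y / ζ) / ζ) / (1 + τ * (y / (a * w)) ^ (-α))) * w)
      atTop (𝓝 (2 * b)⁻¹) := by
  have hfi : IntegrableOn f (Ioi 0) := integrable_of_integral_eq_one hf1
  set I : ℝ → ℝ → ℝ := fun ζ w => ∫ y in Ioi 0, centerWeight α τ (a * w) y * (f (y / ζ) / ζ)
  have hI_eq : ∀ ζ, ∀ w ∈ Ioi (0 : ℝ),
      ∫ y in Ioi (a * w), (f (y / ζ) / ζ) / (1 + τ * (y / (a * w)) ^ (-α)) = I ζ w :=
    fun ζ w hw => setIntegral_Ioi_div_eq_centerWeight (mul_pos ha hw).le _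
  have hI_le : ∀ ζ > 0, ∀ w > 0, |I ζ w| ≤ 1 := fun ζ hζ w hw =>
    hf1 ▸ abs_setIntegral_Ioi_mul_rescale_le hfi hf0
      (abs_centerWeight_le_one hτ (mul_pos ha hw).le) hζ
  have hI_lim : ∀ w > 0, Tendsto (I · w) atTop (𝓝 1) := fun w hw => by
    simpa [hf1] using tendsto_setIntegral_Ioi_mul_rescale hfi
      measurable_centerWeight_uncurry.of_uncurry_left
      (abs_centerWeight_le_one hτ (mul_pos ha hw).le)
      (tendsto_centerWeight_atTop hα (mul_pos ha hw))
  have hI_meas : ∀ ζ, StronglyMeasurable (I ζ) := fun ζ =>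
    StronglyMeasurable.integral_prod_right'
      (f := fun p : ℝ × ℝ => centerWeight α τ (a * p.1) p.2 * (f (p.2 / ζ) / ζ))
      (((measurable_centerWeight_uncurry (α := α) (τ := τ)).comp
        (measurable_fst.const_mul a |>.prodMk measurable_snd)).mul
        (by fun_prop)).stronglyMeasurable
  have hcongr : ∀ ζ, ∫ w in Ioi 0, exp (-(b * w ^ 2)) *
      (∫ y in Ioi (a * w), (f (y / ζ) / ζ) / (1 + τ * (y / (a * w)) ^ (-α))) * w =
      ∫ w in Ioi 0, exp (-(b * w ^ 2)) * I ζ w * w := fun ζ =>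
    setIntegral_congr_fun measurableSet_Ioi fun w hw => by rw [hI_eq ζ w hw]
  simp_rw [hcongr, ← integral_Ioi_exp_neg_mul_sq_mul_self hb]
  refine tendsto_integral_filter_of_dominated_convergence _
    (Eventually.of_forall fun ζ => ?_) ?_ (integrableOn_Ioi_exp_neg_mul_sq_mul_self hb) ?_
  · exact (((by fun_prop : Measurable fun w : ℝ => exp (-(b * w ^ 2))).mul
      (hI_meas ζ).measurable).mul measurable_id).aestronglyMeasurable
  · filter_upwards [eventually_gt_atTop 0] with ζ hζ
    filter_upwards [ae_restrict_mem measurableSet_Ioi] with w hw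
    rw [norm_mul, norm_mul, norm_of_nonneg (exp_pos _).le, norm_of_nonneg hw.le]
    exact mul_le_mul_of_nonneg_right
      (mul_le_of_le_one_right (exp_pos _).le (hI_le ζ hζ w hw)) hw.le
  · filter_upwards [ae_restrict_mem measurableSet_Ioi] with w hw
    simpa using ((hI_lim w hw).const_mul (exp (-(b * w ^ 2)))).mul_const w

theorem coverage_converges_to_ppp_general
    (K : ℕ) (i : Fin K) (α τ : ℝ) (hα : 2 < α) (hτ : 0 < τ)
    (lam lam' : Fin K → ℝ) (hlam : ∀ k, 0 < lam k) (hlam' : ∀ k, 0 ≤ lam' k)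
    (Pow : Fin K → ℝ) (hPow : ∀ k, 0 < Pow k)
    (c : Fin K → Fin K → ℝ) (hc : ∀ j k, c j k = (Pow k / Pow j) ^ (1 / α))
    (c0 : Fin K → ℝ) (hc0 : ∀ k, c0 k = (Pow k / Pow i) ^ (1 / α))
    (f : ℝ → ℝ) (hfcont : Continuous f) (hfnn : ∀ y, 0 ≤ f y)
    (hfint : ∫ y in Set.Ioi (0 : ℝ), f y = 1)
    (S : Fin K → ℝ)
    (hS : ∀ j, S j = ∑ k : Fin K,
      (c j k) ^ 2 * (lam k * (Gconst α τ + 1) + lam' k * Hconst α τ))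
    (S0 : ℝ)
    (hS0 : S0 = ∑ k : Fin K,
      (c0 k) ^ 2 * (lam k * (Gconst α τ + 1) + lam' k * Hconst α τ))
    (Pc : ℝ → ℝ)
    (hPc : ∀ ζ : ℝ, 0 < ζ → Pc ζ =
      (∫ w in Set.Ioi (0 : ℝ), Real.exp (-(π * S0 * w ^ 2)) * (f (w / ζ) / ζ)) +
      ∑ j : Fin K, 2 * π * lam j *
        ∫ w in Set.Ioi (0 : ℝ),
          Real.exp (-(π * S j * w ^ 2)) *
            (∫ y in Set.Ioi (c j i * w),
              (f (y / ζ) / ζ) / (1 + τ * (y / (c j i * w)) ^ (-α))) * w) :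
    Tendsto Pc atTop (nhds (∑ j : Fin K, lam j / S j)) := by
  have hG := Gconst_nonneg hα hτ
  have hH := Hconst_nonneg hα hτ
  have hc_pos : ∀ j k, 0 < c j k := fun j k =>
    hc j k ▸ rpow_pos_of_pos (div_pos (hPow k) (hPow j)) _
  have : Nonempty (Fin K) := ⟨i⟩
  have hS_pos : ∀ j, 0 < S j := fun j =>
    hS j ▸ sum_sq_mul_interference_pos (hc_pos j) hlam hlam' hG hH
  have hS0_pos : 0 < S0 := hS0 ▸ sum_sq_mul_interference_pos
    (fun k => hc0 k ▸ rpow_pos_of_pos (div_pos (hPow k) (hPow i)) _) hlam hlam' hG hH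
  have hcenter : Tendsto (fun ζ : ℝ => ∫ w in Ioi 0, exp (-(π * S0 * w ^ 2)) * (f (w / ζ) / ζ))
      atTop (𝓝 0) := by
    simpa using tendsto_setIntegral_Ioi_mul_rescale (integrable_of_integral_eq_one hfint)
      (by fun_prop) (abs_exp_neg_mul_sq_le_one (by positivity))
      (tendsto_exp_neg_mul_sq_atTop (mul_pos pi_pos hS0_pos))
  have htiers := tendsto_finsetSum univ fun j _ =>
    (tendsto_integral_Ioi_exp_neg_mul_sq_mul_centerWeight (lt_trans two_pos hα) hτ.le
      (hc_pos j i) (mul_pos pi_pos (hS_pos j)) hfcont.measurable hfnn hfint).const_mul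
      (2 * π * lam j)
  have hlimit : 0 + ∑ j, 2 * π * lam j * (2 * (π * S j))⁻¹ = ∑ j, lam j / S j := by
    rw [zero_add]
    exact sum_congr rfl fun j _ => by field_simp [(hS_pos j).ne']
  refine (hlimit ▸ hcenter.add htiers).congr' ?_
  filter_upwards [eventually_gt_atTop 0] with ζ hζ
  exact (hPc ζ hζ).symm

/-- Lemma 5: in the interference-limited `K`-tier model with no
shadowing, when the typical user's distance to its cluster center (a tier-`i` BS) is
scaled by `ζ` (distance `ζY₀`, `Y₀` a positive random variable with continuous PDF
`f`), the total coverage probability `P_c(ζ)` — cluster-center term plus the per-tier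
terms of Corollary 2 — converges, as `ζ → ∞`, to
`∑_{j=1}^K λ_j / (∑_{k=1}^K c_{jk}²(λ_k(G(α,τ)+1) + λ_k′H(α,τ)))`,
the coverage probability of a user located independently of the BSs. -/
theorem coverage_converges_to_ppp
    (K : ℕ) (i : Fin K) (α τ : ℝ) (hα : 2 < α) (hτ : 0 < τ)
    (lam lam' : Fin K → ℝ) (hlam : ∀ k, 0 < lam k) (hlam' : ∀ k, 0 ≤ lam' k)
    (Pow : Fin K → ℝ) (hPow : ∀ k, 0 < Pow k)
    (c : Fin K → Fin K → ℝ) (hc : ∀ j k, c j k = (Pow k / Pow j) ^ (1 / α))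
    (c0 : Fin K → ℝ) (hc0 : ∀ k, c0 k = (Pow k / Pow i) ^ (1 / α))
    (f : ℝ → ℝ) (hfcont : Continuous f) (hfnn : ∀ y, 0 ≤ f y)
    (hfsupp : ∀ y : ℝ, y ≤ 0 → f y = 0)
    (hfint : ∫ y in Set.Ioi (0 : ℝ), f y = 1)
    (S : Fin K → ℝ)
    (hS : ∀ j, S j = ∑ k : Fin K,
      (c j k) ^ 2 * (lam k * (Gconst α τ + 1) + lam' k * Hconst α τ))
    (S0 : ℝ)
    (hS0 : S0 = ∑ k : Fin K,
      (c0 k) ^ 2 * (lam k * (Gconst α τ + 1) + lam' k * Hconst α τ))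
    (Pc : ℝ → ℝ)
    (hPc : ∀ ζ : ℝ, 0 < ζ → Pc ζ =
      (∫ w in Set.Ioi (0 : ℝ), Real.exp (-(π * S0 * w ^ 2)) * (f (w / ζ) / ζ)) +
      ∑ j : Fin K, 2 * π * lam j *
        ∫ w in Set.Ioi (0 : ℝ),
          Real.exp (-(π * S j * w ^ 2)) *
            (∫ y in Set.Ioi (c j i * w),
              (f (y / ζ) / ζ) / (1 + τ * (y / (c j i * w)) ^ (-α))) * w) :
    Tendsto Pc atTop (nhds (∑ j : Fin K, lam j / S j)) :=
  coverage_converges_to_ppp_general K i α τ hα hτ lam lam' hlam hlam' Pow hPow c hc c0 hc0 f hfcont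
    hfnn hfint S hS S0 hS0 Pc hPc
end
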